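/- arXiv:1301.6638 — 3 statements merged into one kernel-verified Lean document; each statement's English description precedes it below -/
import Mathlib

section
/- For every real number a, the integral over (−∞, 0] of Φ(a x) φ(x) dx equals 1/4 − (1/(2π)) · arctan(a), where φ is the standard Gaussian density and Φ its distribution function. -/
open MeasureTheory Real

/-- Standard normal density. -/
noncomputable def stdPdf (x : ℝ) : ℝ := (Real.sqrt (2 * Real.pi))⁻¹ * Real.exp (-x ^ 2 / 2)

/-- Standard normal distribution function. -/
noncomputable def stdCdf (x : ℝ) : ℝ := ∫ t in Set.Iic x, stdPdf t

/-!
Write `F a` for the integral. Differentiating under the integral sign, `Φ' = φ` gives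
`F' a = ∫_{x ≤ 0} x φ(a x) φ(x) dx`, and since `φ(a x) φ(x) = e^{-(1 + a²) x² / 2} / (2π)` this is
an elementary integral, equal to `-1 / (2π (1 + a²))`, the derivative of `-arctan a / (2π)`.
The constant is fixed by `F 0 = Φ(0)² = 1/4`, using the symmetry of `φ`.
-/

open Set Filter ProbabilityTheory

theorem integral_Ioi_mul_exp_neg_mul_sq {b : ℝ} (hb : 0 < b) :
    ∫ x in Ioi (0 : ℝ), x * exp (-b * x ^ 2) = (2 * b)⁻¹ := by
  apply Complex.ofReal_injective
  rw [← integral_complex_ofReal]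
  push_cast
  exact integral_mul_cexp_neg_mul_sq (by simpa using hb)

theorem integral_Iic_mul_exp_neg_mul_sq {b : ℝ} (hb : 0 < b) :
    ∫ x in Iic (0 : ℝ), x * exp (-b * x ^ 2) = -(2 * b)⁻¹ := by
  rw [← neg_zero, ← integral_comp_neg_Ioi, ← integral_Ioi_mul_exp_neg_mul_sq hb, ← integral_neg]
  simp

lemma stdPdf_eq_gaussianPDFReal : stdPdf = gaussianPDFReal 0 1 := by
  ext x
  simp [stdPdf, gaussianPDFReal]

lemma stdPdf_nonneg (x : ℝ) : 0 ≤ stdPdf x := by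
  rw [stdPdf_eq_gaussianPDFReal]
  exact gaussianPDFReal_nonneg 0 1 x

lemma integrable_stdPdf : Integrable stdPdf := by
  rw [stdPdf_eq_gaussianPDFReal]
  exact integrable_gaussianPDFReal 0 1

lemma integral_stdPdf : ∫ x, stdPdf x = 1 := by
  rw [stdPdf_eq_gaussianPDFReal]
  exact integral_gaussianPDFReal_eq_one 0 one_ne_zero

lemma continuous_stdPdf : Continuous stdPdf := by
  unfold stdPdf
  fun_prop

lemma stdPdf_neg (x : ℝ) : stdPdf (-x) = stdPdf x := by
  simp [stdPdf]

lemma stdPdf_le (x : ℝ) : stdPdf x ≤ (√(2 * π))⁻¹ :=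
  mul_le_of_le_one_right (by positivity) (exp_le_one_iff.2 (by nlinarith [sq_nonneg x]))

lemma stdPdf_mul_stdPdf (x y : ℝ) :
    stdPdf x * stdPdf y = (2 * π)⁻¹ * exp (-(x ^ 2 + y ^ 2) / 2) := by
  have hsqrt : √(2 * π) * √(2 * π) = 2 * π := mul_self_sqrt (by positivity)
  rw [stdPdf, stdPdf, mul_mul_mul_comm, ← mul_inv, hsqrt, ← exp_add]
  ring_nf

lemma integrable_abs_mul_stdPdf : Integrable fun x => |x| * stdPdf x := by
  refine ((integrable_mul_exp_neg_mul_sq (b := 1 / 2) (by norm_num)).abs.const_mul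
    (√(2 * π))⁻¹).congr (ae_of_all _ fun x => ?_)
  simp only [abs_mul, abs_of_pos (exp_pos _), stdPdf]
  ring_nf

lemma stdCdf_nonneg (x : ℝ) : 0 ≤ stdCdf x :=
  setIntegral_nonneg measurableSet_Iic fun t _ => stdPdf_nonneg t

lemma stdCdf_le_one (x : ℝ) : stdCdf x ≤ 1 :=
  integral_stdPdf ▸ setIntegral_le_integral integrable_stdPdf (ae_of_all _ stdPdf_nonneg)

lemma stdCdf_zero : stdCdf 0 = 1 / 2 := by
  have hsymm : ∫ x in Iic (0 : ℝ), stdPdf x = ∫ x in Ioi (0 : ℝ), stdPdf x := by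
    rw [← neg_zero, ← integral_comp_neg_Iic]
    simp only [neg_zero, stdPdf_neg]
  have hsum : (∫ x in Iic (0 : ℝ), stdPdf x) + ∫ x in Ioi (0 : ℝ), stdPdf x = 1 := by
    rw [← setIntegral_union (Iic_disjoint_Ioi le_rfl) measurableSet_Ioi
      integrable_stdPdf.integrableOn integrable_stdPdf.integrableOn, Iic_union_Ioi,
      setIntegral_univ, integral_stdPdf]
  rw [stdCdf]
  linarith

lemma hasDerivAt_stdCdf (x : ℝ) : HasDerivAt stdCdf (stdPdf x) x := by
  have hsplit : (fun y => stdCdf 0 + ∫ t in (0 : ℝ)..y, stdPdf t) = stdCdf := by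
    ext y
    rw [← intervalIntegral.integral_Iic_sub_Iic integrable_stdPdf.integrableOn
      integrable_stdPdf.integrableOn, stdCdf, stdCdf, add_sub_cancel]
  rw [← hsplit]
  exact (intervalIntegral.integral_hasDerivAt_right integrable_stdPdf.intervalIntegrable
    (continuous_stdPdf.stronglyMeasurableAtFilter _ _) continuous_stdPdf.continuousAt).const_add _

lemma continuous_stdCdf : Continuous stdCdf :=
  continuous_iff_continuousAt.2 fun x => (hasDerivAt_stdCdf x).continuousAt

lemma integral_Iic_mul_stdPdf_mul_stdPdf (a : ℝ) :
    ∫ x in Iic (0 : ℝ), x * stdPdf (a * x) * stdPdf x = -(2 * π * (1 + a ^ 2))⁻¹ := by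
  have hgauss : ∀ x : ℝ, x * stdPdf (a * x) * stdPdf x
      = (2 * π)⁻¹ * (x * exp (-((1 + a ^ 2) / 2) * x ^ 2)) := by
    intro x
    rw [mul_assoc, stdPdf_mul_stdPdf]
    ring_nf
  simp_rw [hgauss]
  rw [integral_const_mul, integral_Iic_mul_exp_neg_mul_sq (by positivity)]
  field_simp

lemma hasDerivAt_integral_Iic_stdCdf_mul_stdPdf (a : ℝ) :
    HasDerivAt (fun c => ∫ x in Iic (0 : ℝ), stdCdf (c * x) * stdPdf x)
      (∫ x in Iic (0 : ℝ), x * stdPdf (a * x) * stdPdf x) a := by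
  have hmeas : ∀ c : ℝ, AEStronglyMeasurable (fun x => stdCdf (c * x) * stdPdf x)
      (volume.restrict (Iic 0)) := fun c => by
    have := continuous_stdCdf
    have := continuous_stdPdf
    fun_prop
  have hintegrable : Integrable (fun x => stdCdf (a * x) * stdPdf x) (volume.restrict (Iic 0)) :=
    integrable_stdPdf.restrict.mono (hmeas a) (ae_of_all _ fun x => by
      rw [norm_mul, norm_of_nonneg (stdCdf_nonneg _)]
      exact mul_le_of_le_one_left (norm_nonneg _) (stdCdf_le_one _))
  have hderiv_meas : AEStronglyMeasurable (fun x => x * stdPdf (a * x) * stdPdf x)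
      (volume.restrict (Iic 0)) := by
    have := continuous_stdPdf
    fun_prop
  have hbound : ∀ᵐ x ∂volume.restrict (Iic (0 : ℝ)), ∀ c ∈ univ,
      ‖x * stdPdf (c * x) * stdPdf x‖ ≤ (√(2 * π))⁻¹ * (|x| * stdPdf x) :=
    ae_of_all _ fun x c _ => by
      rw [norm_mul, norm_mul, norm_of_nonneg (stdPdf_nonneg _), norm_of_nonneg (stdPdf_nonneg _),
        norm_eq_abs, mul_right_comm, mul_comm _ (|x| * _)]
      exact mul_le_mul_of_nonneg_left (stdPdf_le _) (by positivity [stdPdf_nonneg x])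
  have hderiv : ∀ᵐ x ∂volume.restrict (Iic (0 : ℝ)), ∀ c ∈ univ,
      HasDerivAt (fun c => stdCdf (c * x) * stdPdf x) (x * stdPdf (c * x) * stdPdf x) c :=
    ae_of_all _ fun x c _ => by
      simpa [mul_comm] using
        ((hasDerivAt_stdCdf (c * x)).comp c (hasDerivAt_mul_const x)).mul_const (stdPdf x)
  exact (hasDerivAt_integral_of_dominated_loc_of_deriv_le univ_mem (Eventually.of_forall hmeas)
    hintegrable hderiv_meas hbound (integrable_abs_mul_stdPdf.restrict.const_mul _) hderiv).2

/-- For every real `a`, `∫_{(-∞,0]} Φ(a x) φ(x) dx = 1/4 - arctan a / (2π)`. -/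
theorem integral_cdf_pdf_Iic (a : ℝ) :
    ∫ x in Set.Iic (0 : ℝ), stdCdf (a * x) * stdPdf x =
      1 / 4 - (1 / (2 * Real.pi)) * Real.arctan a := by
  set F : ℝ → ℝ := fun c => ∫ x in Iic (0 : ℝ), stdCdf (c * x) * stdPdf x
  set G : ℝ → ℝ := fun c => 1 / 4 - (1 / (2 * π)) * arctan c
  have hdiff : ∀ c, HasDerivAt (fun c => F c - G c) 0 c := fun c => by
    have hG := ((hasDerivAt_arctan c).const_mul (1 / (2 * π))).const_sub (1 / 4)
    refine ((hasDerivAt_integral_Iic_stdCdf_mul_stdPdf c).sub hG).congr_deriv ?_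
    rw [integral_Iic_mul_stdPdf_mul_stdPdf]
    field_simp
    ring
  have hconst : F a - G a = F 0 - G 0 :=
    is_const_of_deriv_eq_zero (fun c => (hdiff c).differentiableAt) (fun c => (hdiff c).deriv) a 0
  have hF0 : F 0 = 1 / 4 := by
    simp only [F, zero_mul, integral_const_mul, stdCdf_zero]
    rw [← stdCdf, stdCdf_zero]
    norm_num
  have hG0 : G 0 = 1 / 4 := by simp [G]
  change F a = G a
  linarith
end

section
/- With M = cY·sgn(aX + bY − cY), X, Y independent standard Gaussians, a > 0, c > 0, β = (c−b)/a, for every k ≥ 1 one has E[M^{2k−1}] = −(2^k (k−1)! c^{2k−1} β / √(2π(1+β²))) · Σ_{j=0}^{k−1} ((2j−1)!!/(2j)!!) · (1+β²)^{−j}. -/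
open MeasureTheory ProbabilityTheory Real Finset
open scoped NNReal Nat

/-!
Since `a > 0`, the integrand is `c ^ (2k-1) Y ^ (2k-1) sgn (X - βY)`. Integrating out `X` first,
`E[sgn (X - t)] = 1 - 2Φ(t)`, so the moment is `c ^ (2k-1) E[Y ^ (2k-1) u(Y)]` with
`u(y) = 1 - 2Φ(βy)` and `u' = -2β φ(β ·)`. Stein's identity `E[Y g(Y)] = E[g'(Y)]` for
`g = y ^ (2j) u` gives `I_j = 2j I_{j-1} - 2β E[Y ^ (2j) φ(βY)]` for `I_j = E[Y ^ (2j+1) u(Y)]`,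
and since `φ(y) φ(βy)` is `(2π(1+β²))^(-1/2)` times the `N(0, 1/(1+β²))` density, the last
expectation is `(2j-1)!! / ((1+β²)^j √(2π(1+β²)))`. Unrolling the recursion gives the sum.
-/

@[fun_prop]
lemma Real.measurable_sign : Measurable Real.sign :=
  Measurable.ite measurableSet_Iio measurable_const
    (Measurable.ite measurableSet_Ioi measurable_const measurable_const)

lemma Real.sign_mul_of_pos {a : ℝ} (ha : 0 < a) (z : ℝ) : Real.sign (a * z) = Real.sign z := by
  rcases lt_trichotomy z 0 with h | rfl | h
  · rw [Real.sign_of_neg h, Real.sign_of_neg (mul_neg_of_pos_of_neg ha h)]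
  · rw [mul_zero]
  · rw [Real.sign_of_pos h, Real.sign_of_pos (mul_pos ha h)]

lemma Real.sign_pow_of_odd {n : ℕ} (hn : Odd n) (z : ℝ) : Real.sign z ^ n = Real.sign z := by
  rcases Real.sign_apply_eq z with h | h | h <;> simp [h, hn.neg_one_pow, hn.pos.ne']

lemma eq_two_pow_mul_factorial_mul_sum {I K : ℕ → ℝ} (h0 : I 0 = K 0)
    (hsucc : ∀ j, I (j + 1) = 2 * (j + 1) * I j + K (j + 1)) (m : ℕ) :
    I m = 2 ^ m * m ! * ∑ j ∈ range (m + 1), K j / (2 ^ j * j !) := by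
  induction m with
  | zero => simp [h0]
  | succ m ih =>
    rw [hsucc, ih, sum_range_succ _ (m + 1), Nat.factorial_succ]
    push_cast
    field_simp
    ring

namespace ProbabilityTheory

lemma continuous_gaussianPDFReal (μ : ℝ) (v : ℝ≥0) : Continuous (gaussianPDFReal μ v) := by
  unfold gaussianPDFReal; fun_prop

lemma hasDerivAt_gaussianPDFReal (μ : ℝ) (v : ℝ≥0) (x : ℝ) :
    HasDerivAt (gaussianPDFReal μ v) (-((x - μ) / v) * gaussianPDFReal μ v x) x := by
  have h : HasDerivAt (fun x => -(x - μ) ^ 2 / (2 * v)) (-(2 * (x - μ)) / (2 * v)) x := by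
    simpa using (((hasDerivAt_id x).sub_const μ).pow 2).neg.div_const (2 * (v : ℝ))
  refine (h.exp.const_mul (√(2 * π * v))⁻¹).congr_deriv ?_
  rw [gaussianPDFReal]
  rcases eq_or_ne (v : ℝ) 0 with hv | hv
  · simp [hv]
  · field_simp

lemma integrable_gaussianReal_iff {μ : ℝ} {v : ℝ≥0} (hv : v ≠ 0) {f : ℝ → ℝ} :
    Integrable f (gaussianReal μ v) ↔ Integrable (fun x => gaussianPDFReal μ v x * f x) := by
  rw [gaussianReal_of_var_ne_zero _ hv, gaussianPDF_def,
    integrable_withDensity_iff_integrable_smul' (by fun_prop) (by simp)]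
  simp [gaussianPDFReal_nonneg]

lemma integrable_pow_gaussianReal (μ : ℝ) (v : ℝ≥0) (n : ℕ) :
    Integrable (fun x => x ^ n) (gaussianReal μ v) := by
  rcases eq_or_ne n 0 with rfl | hn
  · simp
  refine (integrable_norm_iff (by fun_prop)).1 ?_
  simpa using (memLp_id_gaussianReal (μ := μ) (v := v) n).integrable_norm_pow hn

/-- Stein's lemma. -/
lemma integral_sub_mul_gaussianReal {μ : ℝ} {v : ℝ≥0} {g g' : ℝ → ℝ}
    (hg : ∀ x, HasDerivAt g (g' x) x) (hg_int : Integrable g (gaussianReal μ v))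
    (hg'_int : Integrable g' (gaussianReal μ v))
    (hxg_int : Integrable (fun x => (x - μ) * g x) (gaussianReal μ v)) :
    ∫ x, (x - μ) * g x ∂gaussianReal μ v = v * ∫ x, g' x ∂gaussianReal μ v := by
  rcases eq_or_ne v 0 with rfl | hv
  · simp
  rw [integrable_gaussianReal_iff hv] at hg_int hg'_int hxg_int
  have hv' : (v : ℝ) ≠ 0 := by exact_mod_cast hv
  have hparts := integral_mul_deriv_eq_deriv_mul_of_integrable (u := g)
    (v := gaussianPDFReal μ v) (fun x _ => hg x) (fun x _ => hasDerivAt_gaussianPDFReal μ v x)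
    ((hxg_int.const_mul (-(v : ℝ)⁻¹)).congr
      (ae_of_all _ fun x => by simp only [Pi.mul_apply]; field_simp))
    (hg'_int.congr (ae_of_all _ fun x => mul_comm _ _))
    (hg_int.congr (ae_of_all _ fun x => mul_comm _ _))
  simp only [integral_gaussianReal_eq_integral_smul hv, smul_eq_mul]
  calc ∫ x, gaussianPDFReal μ v x * ((x - μ) * g x)
      = -v * ∫ x, g x * (-((x - μ) / v) * gaussianPDFReal μ v x) := by
        rw [← integral_const_mul]; congr 1; ext x; field_simp
    _ = v * ∫ x, gaussianPDFReal μ v x * g' x := by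
        rw [hparts]; simp only [mul_comm (g' _)]; ring

lemma integral_pow_two_mul_gaussianReal (v : ℝ≥0) (j : ℕ) :
    ∫ x, x ^ (2 * j) ∂gaussianReal 0 v = v ^ j * ∏ i ∈ range j, (2 * (i : ℝ) + 1) := by
  induction j with
  | zero => simp
  | succ j ih =>
    have hstein := integral_sub_mul_gaussianReal (μ := 0) (v := v)
      (fun x => hasDerivAt_pow (2 * j + 1) x) (integrable_pow_gaussianReal 0 v _)
      ((integrable_pow_gaussianReal 0 v _).const_mul _)
      (by simpa [← pow_succ'] using integrable_pow_gaussianReal 0 v (2 * j + 2))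
    simp only [sub_zero, ← pow_succ', integral_const_mul, Nat.add_sub_cancel] at hstein
    rw [show 2 * (j + 1) = 2 * j + 1 + 1 by ring, hstein, ih, prod_range_succ]
    push_cast; ring

lemma hasDerivAt_cdf_gaussianReal (μ : ℝ) {v : ℝ≥0} (hv : v ≠ 0) (t : ℝ) :
    HasDerivAt (cdf (gaussianReal μ v)) (gaussianPDFReal μ v t) t := by
  have hp := integrable_gaussianPDFReal μ v
  have hcdf : cdf (gaussianReal μ v) = fun t =>
      (∫ x in Set.Iic 0, gaussianPDFReal μ v x) + ∫ x in (0 : ℝ)..t, gaussianPDFReal μ v x := by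
    ext t
    rw [cdf_eq_real, measureReal_def, gaussianReal_apply_eq_integral _ hv,
      ENNReal.toReal_ofReal (setIntegral_nonneg measurableSet_Iic
        fun x _ => gaussianPDFReal_nonneg μ v x),
      ← intervalIntegral.integral_Iic_sub_Iic hp.integrableOn hp.integrableOn]
    ring
  rw [hcdf]
  have hc := continuous_gaussianPDFReal μ v
  exact (intervalIntegral.integral_hasDerivAt_right (hc.intervalIntegrable _ _)
    (hc.stronglyMeasurableAtFilter _ _) hc.continuousAt).const_add _

lemma integral_sign_sub {μ : Measure ℝ} [IsProbabilityMeasure μ]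
    [NullSingletonClass μ] (t : ℝ) :
    ∫ x, Real.sign (x - t) ∂μ = 1 - 2 * cdf μ t := by
  have hsign : (fun x => Real.sign (x - t)) =
      fun x => (Set.Ioi t).indicator 1 x - (Set.Iio t).indicator (1 : ℝ → ℝ) x := by
    ext x
    rcases lt_trichotomy x t with h | rfl | h
    · simp [h, h.not_gt, Real.sign_of_neg (sub_neg.2 h)]
    · simp
    · simp [h, h.not_gt, Real.sign_of_pos (sub_pos.2 h)]
  rw [hsign, integral_sub ((integrable_const 1).indicator measurableSet_Ioi)
    ((integrable_const 1).indicator measurableSet_Iio), integral_indicator_one measurableSet_Ioi,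
    integral_indicator_one measurableSet_Iio, ← Set.compl_Iic,
    measureReal_compl measurableSet_Iic, measureReal_congr Iio_ae_eq_Iic, cdf_eq_real,
    probReal_univ]
  ring

lemma integral_prod_mul_sign_sub {μ ν : Measure ℝ} [IsProbabilityMeasure μ]
    [NullSingletonClass μ] [IsProbabilityMeasure ν] {f g : ℝ → ℝ} (hf : Integrable f ν)
    (hg : Measurable g) :
    ∫ p, f p.2 * Real.sign (p.1 - g p.2) ∂μ.prod ν = ∫ y, f y * (1 - 2 * cdf μ (g y)) ∂ν := by
  have hint : Integrable (fun p : ℝ × ℝ => f p.2 * Real.sign (p.1 - g p.2)) (μ.prod ν) :=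
    (hf.comp_snd μ).mul_bdd (c := 1)
      (Real.measurable_sign.comp (measurable_fst.sub (hg.comp measurable_snd))).aestronglyMeasurable
      (ae_of_all _ fun p => by
        rcases Real.sign_apply_eq (p.1 - g p.2) with h | h | h <;> simp [h])
  rw [integral_prod_symm _ hint]
  simp only [integral_const_mul, integral_sign_sub]

lemma gaussianPDFReal_mul_gaussianPDFReal_mul (β y : ℝ) :
    gaussianPDFReal 0 1 y * gaussianPDFReal 0 1 (β * y) =
      (√(2 * π * (1 + β ^ 2)))⁻¹ * gaussianPDFReal 0 (1 + β ^ 2)⁻¹.toNNReal y := by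
  have hs : 0 < 1 + β ^ 2 := by positivity
  simp only [gaussianPDFReal, Real.coe_toNNReal _ (inv_pos.2 hs).le, NNReal.coe_one, sub_zero,
    mul_one]
  rw [mul_mul_mul_comm, ← Real.exp_add, ← mul_assoc, ← mul_inv, ← mul_inv,
    ← Real.sqrt_mul (by positivity), ← Real.sqrt_mul (by positivity)]
  congr 3
  · field_simp
  · field_simp; ring

lemma _root_.Real.toNNReal_inv_one_add_sq_ne_zero (β : ℝ) : (1 + β ^ 2)⁻¹.toNNReal ≠ 0 := by
  simp only [ne_eq, Real.toNNReal_eq_zero, not_le]; positivity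

lemma integrable_pow_mul_gaussianPDFReal_mul (β : ℝ) (n : ℕ) :
    Integrable (fun y => y ^ n * gaussianPDFReal 0 1 (β * y)) (gaussianReal 0 1) := by
  rw [integrable_gaussianReal_iff one_ne_zero]
  refine (((integrable_gaussianReal_iff (Real.toNNReal_inv_one_add_sq_ne_zero β)).1
    (integrable_pow_gaussianReal 0 _ n)).const_mul (√(2 * π * (1 + β ^ 2)))⁻¹).congr
    (ae_of_all _ fun y => ?_)
  simp only
  rw [← mul_assoc, ← gaussianPDFReal_mul_gaussianPDFReal_mul]
  ring

lemma integral_pow_two_mul_mul_gaussianPDFReal_mul (β : ℝ) (j : ℕ) :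
    ∫ y, y ^ (2 * j) * gaussianPDFReal 0 1 (β * y) ∂gaussianReal 0 1 =
      (∏ i ∈ range j, (2 * (i : ℝ) + 1)) / ((1 + β ^ 2) ^ j * √(2 * π * (1 + β ^ 2))) := by
  have hw := Real.toNNReal_inv_one_add_sq_ne_zero β
  calc ∫ y, y ^ (2 * j) * gaussianPDFReal 0 1 (β * y) ∂gaussianReal 0 1
      = (√(2 * π * (1 + β ^ 2)))⁻¹ *
          ∫ y, y ^ (2 * j) ∂gaussianReal 0 (1 + β ^ 2)⁻¹.toNNReal := by
        simp only [integral_gaussianReal_eq_integral_smul one_ne_zero,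
          integral_gaussianReal_eq_integral_smul hw, smul_eq_mul, ← integral_const_mul]
        congr 1; ext y
        rw [← mul_assoc, mul_right_comm _ (y ^ _), gaussianPDFReal_mul_gaussianPDFReal_mul]
        ring
    _ = _ := by
        rw [integral_pow_two_mul_gaussianReal, Real.coe_toNNReal _ (by positivity), inv_pow]
        field_simp

section OneSubTwoMulCDF

variable (β : ℝ)

lemma hasDerivAt_one_sub_two_mul_cdf (y : ℝ) :
    HasDerivAt (fun y => 1 - 2 * cdf (gaussianReal 0 1) (β * y))
      (-2 * β * gaussianPDFReal 0 1 (β * y)) y := by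
  have h := (hasDerivAt_cdf_gaussianReal 0 one_ne_zero (β * y)).comp y
    ((hasDerivAt_id' y).const_mul β)
  exact ((h.const_mul 2).const_sub 1).congr_deriv (by ring)

lemma continuous_one_sub_two_mul_cdf :
    Continuous fun y => 1 - 2 * cdf (gaussianReal 0 1) (β * y) :=
  continuous_iff_continuousAt.2 fun y => (hasDerivAt_one_sub_two_mul_cdf β y).continuousAt

lemma integrable_pow_mul_one_sub_two_mul_cdf (n : ℕ) :
    Integrable (fun y => y ^ n * (1 - 2 * cdf (gaussianReal 0 1) (β * y))) (gaussianReal 0 1) :=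
  (integrable_pow_gaussianReal 0 1 n).mul_bdd
    (continuous_one_sub_two_mul_cdf β).aestronglyMeasurable (c := 1) (ae_of_all _ fun y =>
      abs_le.2 ⟨by linarith [cdf_le_one (gaussianReal 0 1) (β * y)],
        by linarith [cdf_nonneg (gaussianReal 0 1) (β * y)]⟩)

-- At `j = 0` the truncated exponent `2 * j - 1` is harmless: its coefficient is `0`.
lemma integral_pow_two_mul_add_one_mul_one_sub_two_mul_cdf (j : ℕ) :
    ∫ y, y ^ (2 * j + 1) * (1 - 2 * cdf (gaussianReal 0 1) (β * y)) ∂gaussianReal 0 1 =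
      2 * j * ∫ y, y ^ (2 * j - 1) * (1 - 2 * cdf (gaussianReal 0 1) (β * y)) ∂gaussianReal 0 1
      - 2 * β * ∫ y, y ^ (2 * j) * gaussianPDFReal 0 1 (β * y) ∂gaussianReal 0 1 := by
  have hderiv (y : ℝ) :
      HasDerivAt (fun y => y ^ (2 * j) * (1 - 2 * cdf (gaussianReal 0 1) (β * y)))
        (2 * j * (y ^ (2 * j - 1) * (1 - 2 * cdf (gaussianReal 0 1) (β * y)))
          - 2 * β * (y ^ (2 * j) * gaussianPDFReal 0 1 (β * y))) y :=
    ((hasDerivAt_pow (2 * j) y).mul (hasDerivAt_one_sub_two_mul_cdf β y)).congr_deriv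
      (by push_cast; ring)
  have hstein := integral_sub_mul_gaussianReal hderiv
    (integrable_pow_mul_one_sub_two_mul_cdf β _)
    (((integrable_pow_mul_one_sub_two_mul_cdf β _).const_mul _).sub
      ((integrable_pow_mul_gaussianPDFReal_mul β (2 * j)).const_mul _))
    (by simpa [pow_succ', mul_assoc] using integrable_pow_mul_one_sub_two_mul_cdf β (2 * j + 1))
  rw [integral_sub ((integrable_pow_mul_one_sub_two_mul_cdf β _).const_mul _)
    ((integrable_pow_mul_gaussianPDFReal_mul β (2 * j)).const_mul _), integral_const_mul,
    integral_const_mul] at hstein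
  simpa [pow_succ', mul_assoc] using hstein

lemma integral_pow_two_mul_add_one_mul_one_sub_two_mul_cdf_eq_sum (m : ℕ) :
    ∫ y, y ^ (2 * m + 1) * (1 - 2 * cdf (gaussianReal 0 1) (β * y)) ∂gaussianReal 0 1 =
      -(2 ^ (m + 1) * m ! * β / √(2 * π * (1 + β ^ 2))) *
        ∑ j ∈ range (m + 1), (∏ i ∈ range j, (2 * (i : ℝ) + 1)) / (2 ^ j * j !) *
          ((1 + β ^ 2) ^ j)⁻¹ := by
  have hrec := integral_pow_two_mul_add_one_mul_one_sub_two_mul_cdf β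
  rw [eq_two_pow_mul_factorial_mul_sum (I := fun j => ∫ y, y ^ (2 * j + 1) *
    (1 - 2 * cdf (gaussianReal 0 1) (β * y)) ∂gaussianReal 0 1) (K := fun j =>
    -2 * β * ∫ y, y ^ (2 * j) * gaussianPDFReal 0 1 (β * y) ∂gaussianReal 0 1)
    (by simpa using hrec 0) (fun j => ?_) m]
  · simp only [integral_pow_two_mul_mul_gaussianPDFReal_mul, mul_sum]
    refine sum_congr rfl fun j _ => ?_
    field_simp
    ring
  · rw [hrec (j + 1), show 2 * (j + 1) - 1 = 2 * j + 1 by omega]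
    push_cast; ring

end OneSubTwoMulCDF

end ProbabilityTheory

theorem odd_moments_general {Ω : Type*} [MeasureSpace Ω]
    [IsProbabilityMeasure (ℙ : Measure Ω)]
    (X Y : Ω → ℝ) (hXm : Measurable X) (hYm : Measurable Y)
    (hindep : IndepFun X Y ℙ)
    (hX : Measure.map X ℙ = gaussianReal 0 1)
    (hY : Measure.map Y ℙ = gaussianReal 0 1)
    (a b c β : ℝ) (ha : 0 < a) (hβ : β = (c - b) / a)
    (k : ℕ) (hk : 1 ≤ k) :
    ∫ ω, (c * Y ω * Real.sign (a * X ω + b * Y ω - c * Y ω)) ^ (2 * k - 1) ∂ℙ =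
      -(2 ^ k * (Nat.factorial (k - 1) : ℝ) * c ^ (2 * k - 1) * β /
          Real.sqrt (2 * Real.pi * (1 + β ^ 2))) *
        ∑ j ∈ Finset.range k,
          ((∏ i ∈ Finset.range j, (2 * (i : ℝ) + 1)) / (2 ^ j * (Nat.factorial j : ℝ))) *
            ((1 + β ^ 2) ^ j)⁻¹ := by
  obtain ⟨m, rfl⟩ : ∃ m, k = m + 1 := ⟨k - 1, by omega⟩
  rw [show 2 * (m + 1) - 1 = 2 * m + 1 by omega, Nat.add_sub_cancel]
  have hlaw :
      Measure.map (fun ω => (X ω, Y ω)) ℙ = (gaussianReal 0 1).prod (gaussianReal 0 1) := by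
    have h := (indepFun_iff_map_prod_eq_prod_map_map hXm.aemeasurable hYm.aemeasurable).1 hindep
    rwa [hX, hY] at h
  have hintegrand (x y : ℝ) : (c * y * Real.sign (a * x + b * y - c * y)) ^ (2 * m + 1) =
      c ^ (2 * m + 1) * (y ^ (2 * m + 1) * Real.sign (x - β * y)) := by
    rw [show a * x + b * y - c * y = a * (x - β * y) by rw [hβ]; field_simp; ring,
      Real.sign_mul_of_pos ha, mul_pow, mul_pow, Real.sign_pow_of_odd (odd_two_mul_add_one m)]
    ring
  have := nullSingletonClass_gaussianReal (μ := 0) (v := 1) one_ne_zero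
  calc ∫ ω, (c * Y ω * Real.sign (a * X ω + b * Y ω - c * Y ω)) ^ (2 * m + 1) ∂ℙ
      = ∫ p, c ^ (2 * m + 1) * (p.2 ^ (2 * m + 1) * Real.sign (p.1 - β * p.2))
          ∂(gaussianReal 0 1).prod (gaussianReal 0 1) := by
        rw [← hlaw, integral_map (hXm.prodMk hYm).aemeasurable (by fun_prop)]
        simp only [hintegrand]
    _ = c ^ (2 * m + 1) *
          ∫ y, y ^ (2 * m + 1) * (1 - 2 * cdf (gaussianReal 0 1) (β * y)) ∂gaussianReal 0 1 := by
        rw [integral_const_mul, integral_prod_mul_sign_sub (integrable_pow_gaussianReal 0 1 _)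
          (measurable_const_mul β)]
    _ = _ := by
        rw [integral_pow_two_mul_add_one_mul_one_sub_two_mul_cdf_eq_sum]
        ring

/-- With `M = cY·sgn(aX + bY − cY)`, `X, Y` independent standard Gaussians, `a > 0`,
`c > 0`, `β = (c−b)/a`, for every `k ≥ 1`,
`E[M^{2k−1}] = −(2^k (k−1)! c^{2k−1} β / √(2π(1+β²))) Σ_{j=0}^{k−1} ((2j−1)!!/(2j)!!)(1+β²)^{−j}`. -/
theorem odd_moments {Ω : Type*} [MeasureSpace Ω]
    [IsProbabilityMeasure (ℙ : Measure Ω)]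
    (X Y : Ω → ℝ) (hXm : Measurable X) (hYm : Measurable Y)
    (hindep : IndepFun X Y ℙ)
    (hX : Measure.map X ℙ = gaussianReal 0 1)
    (hY : Measure.map Y ℙ = gaussianReal 0 1)
    (a b c β : ℝ) (ha : 0 < a) (hc : 0 < c) (hβ : β = (c - b) / a)
    (k : ℕ) (hk : 1 ≤ k) :
    ∫ ω, (c * Y ω * Real.sign (a * X ω + b * Y ω - c * Y ω)) ^ (2 * k - 1) ∂ℙ =
      -(2 ^ k * (Nat.factorial (k - 1) : ℝ) * c ^ (2 * k - 1) * β /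
          Real.sqrt (2 * Real.pi * (1 + β ^ 2))) *
        ∑ j ∈ Finset.range k,
          ((∏ i ∈ Finset.range j, (2 * (i : ℝ) + 1)) / (2 ^ j * (Nat.factorial j : ℝ))) *
            ((1 + β ^ 2) ^ j)⁻¹ :=
  odd_moments_general X Y hXm hYm hindep hX hY a b c β ha hβ k hk
end

section
/- Fix w₁ ∈ (0,1), σ_r > 0 and ρ ∈ (0, 1). Define μ(σ₁) as in the previous statement. Then there exists σ̄ > 0 such that μ is strictly increasing on (0, σ̄] and strictly decreasing on [σ̄, ∞). -/
/-!
Writing `μ = -c N / √D` with quadratics `N`, `D` and `c = √(2/π)`, one has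
`μ' = -c (2 N' D - N D') / (2 D^{3/2})`. The numerator `g = 2 N' D - N D'` is a cubic whose
derivative is `6 w (1-w) ((1-w)s - ρσ)² + 2σ²(1-w²)(1-ρ²) > 0`, so `g` is strictly increasing;
since `g 0 = -2 w ρ σ³ < 0` and `g` grows at least linearly, it has exactly one root `σ̄ > 0`,
and `μ'` is positive before `σ̄` and negative after it.
-/

open Real Set

theorem HasDerivAt.div_sqrt {f g : ℝ → ℝ} {f' g' x : ℝ} (hf : HasDerivAt f f' x)
    (hg : HasDerivAt g g' x) (hx : 0 < g x) :
    HasDerivAt (fun y => f y / √(g y)) ((2 * f' * g x - f x * g') / (2 * g x * √(g x))) x := by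
  have hsqrt : 0 < √(g x) := sqrt_pos.2 hx
  refine (hf.div (hg.sqrt hx.ne') hsqrt.ne').congr_deriv ?_
  have hsq : √(g x) ^ 2 = g x := sq_sqrt hx.le
  field_simp
  rw [hsq]
  ring

theorem strictMonoOn_Iic_and_strictAntiOn_Ici_of_hasDerivAt {f g k : ℝ → ℝ} {a : ℝ}
    (hf : ∀ x, HasDerivAt f (k x * g x) x) (hk : ∀ x, k x < 0) (hg : StrictMono g)
    (ha : g a = 0) : StrictMonoOn f (Iic a) ∧ StrictAntiOn f (Ici a) := by
  have hcont : Continuous f := continuous_iff_continuousAt.2 fun x => (hf x).continuousAt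
  constructor
  · refine strictMonoOn_of_deriv_pos (convex_Iic a) hcont.continuousOn fun x hx => ?_
    rw [interior_Iic] at hx
    rw [(hf x).deriv]
    exact mul_pos_of_neg_of_neg (hk x) (ha ▸ hg hx)
  · refine strictAntiOn_of_deriv_neg (convex_Ici a) hcont.continuousOn fun x hx => ?_
    rw [interior_Ici] at hx
    rw [(hf x).deriv]
    exact mul_neg_of_neg_of_pos (hk x) (ha ▸ hg hx)

theorem hasDerivAt_quadratic (a b c x : ℝ) :
    HasDerivAt (fun y => a * y ^ 2 + b * y + c) (2 * a * x + b) x :=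
  ((((hasDerivAt_pow 2 x).const_mul a).add ((hasDerivAt_id x).const_mul b)).add_const c).congr_deriv
    (by ring)

theorem hasDerivAt_cubic (a b c d x : ℝ) :
    HasDerivAt (fun y => a * y ^ 3 + b * y ^ 2 + c * y + d) (3 * a * x ^ 2 + 2 * b * x + c) x :=
  (((((hasDerivAt_pow 3 x).const_mul a).add ((hasDerivAt_pow 2 x).const_mul b)).add
    ((hasDerivAt_id x).const_mul c)).add_const d).congr_deriv (by ring)

namespace Payoff

variable (w σ ρ : ℝ)

def numer (s : ℝ) : ℝ := w * (1 - w) * s ^ 2 - σ ^ 2 + (1 - 2 * w) * ρ * σ * s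

def denom (s : ℝ) : ℝ := (1 - w) ^ 2 * s ^ 2 + σ ^ 2 - 2 * (1 - w) * ρ * σ * s

/-- `2 N' D - N D'` for `N = numer` and `D = denom`. -/
def critPoly (s : ℝ) : ℝ :=
  2 * w * (1 - w) ^ 3 * s ^ 3 - 6 * w * (1 - w) ^ 2 * ρ * σ * s ^ 2
    + 2 * σ ^ 2 * (1 - w) * (1 + w - ρ ^ 2 * (1 - 2 * w)) * s - 2 * w * ρ * σ ^ 3

def critSlope : ℝ := 2 * σ ^ 2 * (1 - w ^ 2) * (1 - ρ ^ 2)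

variable {w σ ρ}

theorem critSlope_pos (hw : |w| < 1) (hσ : σ ≠ 0) (hρ : |ρ| < 1) : 0 < critSlope w σ ρ := by
  have hw' : 0 < 1 - w ^ 2 := sub_pos.2 (sq_lt_one_iff_abs_lt_one w |>.2 hw)
  have hρ' : 0 < 1 - ρ ^ 2 := sub_pos.2 (sq_lt_one_iff_abs_lt_one ρ |>.2 hρ)
  unfold critSlope
  positivity

theorem denom_pos (hσ : σ ≠ 0) (hρ : |ρ| < 1) (s : ℝ) : 0 < denom w σ ρ s := by
  have hρ' : 0 < 1 - ρ ^ 2 := sub_pos.2 (sq_lt_one_iff_abs_lt_one ρ |>.2 hρ)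
  have h : denom w σ ρ s = ((1 - w) * s - ρ * σ) ^ 2 + (1 - ρ ^ 2) * σ ^ 2 := by
    unfold denom; ring
  rw [h]
  positivity

theorem hasDerivAt_mul_numer_div_sqrt_denom (c : ℝ) (hσ : σ ≠ 0) (hρ : |ρ| < 1) (s : ℝ) :
    HasDerivAt (fun t => c * numer w σ ρ t / √(denom w σ ρ t))
      (c / (2 * denom w σ ρ s * √(denom w σ ρ s)) * critPoly w σ ρ s) s := by
  have hN : HasDerivAt (fun t => c * numer w σ ρ t)
      (c * (2 * (w * (1 - w)) * s + (1 - 2 * w) * ρ * σ)) s :=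
    ((hasDerivAt_quadratic (w * (1 - w)) ((1 - 2 * w) * ρ * σ) (-σ ^ 2) s).congr_of_eventuallyEq
      (.of_forall fun t => by unfold numer; ring)).const_mul c
  have hD : HasDerivAt (denom w σ ρ) (2 * (1 - w) ^ 2 * s + -(2 * (1 - w) * ρ * σ)) s :=
    (hasDerivAt_quadratic ((1 - w) ^ 2) (-(2 * (1 - w) * ρ * σ)) (σ ^ 2) s).congr_of_eventuallyEq
      (.of_forall fun t => by unfold denom; ring)
  refine (hN.div_sqrt hD (denom_pos hσ hρ s)).congr_deriv ?_
  unfold numer denom critPoly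
  ring

theorem strictMono_critPoly (hw : w ∈ Ico 0 1) (hσ : σ ≠ 0) (hρ : |ρ| < 1) :
    StrictMono (critPoly w σ ρ) := by
  have hw' : 0 ≤ 6 * w * (1 - w) := by nlinarith [hw.1, hw.2]
  refine strictMono_of_hasDerivAt_pos
    (f' := fun s => 6 * w * (1 - w) * ((1 - w) * s - ρ * σ) ^ 2 + critSlope w σ ρ)
    (fun s => ?_) (fun s => ?_)
  · refine (hasDerivAt_cubic (2 * w * (1 - w) ^ 3) (-(6 * w * (1 - w) ^ 2 * ρ * σ))
      (2 * σ ^ 2 * (1 - w) * (1 + w - ρ ^ 2 * (1 - 2 * w))) (-(2 * w * ρ * σ ^ 3))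
      s).congr_of_eventuallyEq (.of_forall fun t => by unfold critPoly; ring) |>.congr_deriv ?_
    unfold critSlope
    ring
  · have := critSlope_pos (abs_lt.2 ⟨by linarith [hw.1], hw.2⟩) hσ hρ
    positivity

theorem critSlope_mul_sub_le_critPoly (hw : w ∈ Icc 0 1) {s : ℝ} (hs : 0 ≤ s) :
    critSlope w σ ρ * s - 2 * w * ρ * σ ^ 3 ≤ critPoly w σ ρ s := by
  have hw' : 0 ≤ w * (1 - w) / 2 := by nlinarith [hw.1, hw.2]
  have h : critPoly w σ ρ s = critSlope w σ ρ * s - 2 * w * ρ * σ ^ 3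
      + w * (1 - w) / 2 * s * ((2 * (1 - w) * s - 3 * ρ * σ) ^ 2 + 3 * ρ ^ 2 * σ ^ 2) := by
    unfold critPoly critSlope; ring
  rw [h]
  exact le_add_of_nonneg_right (by positivity)

theorem exists_pos_critPoly_eq_zero (hw : w ∈ Ioo 0 1) (hσ : 0 < σ) (hρ : ρ ∈ Ioo 0 1) :
    ∃ a > 0, critPoly w σ ρ a = 0 := by
  obtain ⟨hw0, hw1⟩ := hw
  obtain ⟨hρ0, hρ1⟩ := hρ
  set m := critSlope w σ ρ
  set K := 2 * w * ρ * σ ^ 3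
  have hm : 0 < m :=
    critSlope_pos (abs_lt.2 ⟨by linarith, hw1⟩) hσ.ne' (abs_lt.2 ⟨by linarith, hρ1⟩)
  have hK : 0 < K := by positivity
  have h0 : critPoly w σ ρ 0 < 0 := by
    unfold critPoly; linarith
  have hb : 0 < critPoly w σ ρ (K / m + 1) := by
    have hmb : m * (K / m + 1) - K = m := by field_simp; ring
    have := critSlope_mul_sub_le_critPoly (σ := σ) (ρ := ρ) ⟨hw0.le, hw1.le⟩
      (by positivity : 0 ≤ K / m + 1)
    linarith
  have hcont : Continuous (critPoly w σ ρ) := by unfold critPoly; fun_prop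
  obtain ⟨a, ha, hroot⟩ := intermediate_value_Ioo (by positivity) hcont.continuousOn ⟨h0, hb⟩
  exact ⟨a, ha.1, hroot⟩

end Payoff

open Payoff in
/-- For `w₁ ∈ (0,1)`, `σ_r > 0`, `ρ ∈ (0,1)`, there is `σ̄ > 0` such that the expected
payoff `μ(σ₁)` is strictly increasing on `(0, σ̄]` and strictly decreasing on `[σ̄, ∞)`. -/
theorem payoff_unimodal (w₁ σr ρ : ℝ) (hw : w₁ ∈ Set.Ioo (0 : ℝ) 1)
    (hσr : 0 < σr) (hρ : ρ ∈ Set.Ioo (0 : ℝ) 1) :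
    ∃ σbar > (0 : ℝ),
      StrictMonoOn (fun σ₁ : ℝ =>
        -Real.sqrt (2 / Real.pi) *
          (w₁ * (1 - w₁) * σ₁ ^ 2 - σr ^ 2 + (1 - 2 * w₁) * ρ * σr * σ₁) /
          Real.sqrt ((1 - w₁) ^ 2 * σ₁ ^ 2 + σr ^ 2 - 2 * (1 - w₁) * ρ * σr * σ₁))
        (Set.Ioc 0 σbar) ∧
      StrictAntiOn (fun σ₁ : ℝ =>
        -Real.sqrt (2 / Real.pi) *
          (w₁ * (1 - w₁) * σ₁ ^ 2 - σr ^ 2 + (1 - 2 * w₁) * ρ * σr * σ₁) /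
          Real.sqrt ((1 - w₁) ^ 2 * σ₁ ^ 2 + σr ^ 2 - 2 * (1 - w₁) * ρ * σr * σ₁))
        (Set.Ici σbar) := by
  have hσ : σr ≠ 0 := hσr.ne'
  have hρ' : |ρ| < 1 := abs_lt.2 ⟨by linarith [hρ.1], hρ.2⟩
  obtain ⟨σbar, hpos, hroot⟩ := exists_pos_critPoly_eq_zero hw hσr hρ
  have hneg : ∀ s, -√(2 / π) / (2 * denom w₁ σr ρ s * √(denom w₁ σr ρ s)) < 0 := fun s =>
    have := denom_pos (w := w₁) hσ hρ' s
    div_neg_of_neg_of_pos (neg_neg_of_pos (by positivity)) (by positivity)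
  obtain ⟨hmono, hanti⟩ := strictMonoOn_Iic_and_strictAntiOn_Ici_of_hasDerivAt
    (hasDerivAt_mul_numer_div_sqrt_denom _ hσ hρ') hneg
    (strictMono_critPoly (Ioo_subset_Ico_self hw) hσ hρ') hroot
  exact ⟨σbar, hpos, hmono.mono Ioc_subset_Iic_self, hanti⟩
end
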